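/- Let I ⊆ ℝ be a nonempty interval, n ≥ 2, and Fₙ : Iⁿ → I an n-associative, monotone increasing, idempotent function with a neutral element. Then Fₙ is quasitrivial: Fₙ(x₁,…,xₙ) ∈ {x₁,…,xₙ} for all x₁,…,xₙ ∈ I. In fact, Fₙ(x₁,…,xₙ) ∈ {min(x₁,…,xₙ), max(x₁,…,xₙ)}. -/
import Mathlib


/-- The `(k)`-fold iterated composition of a binary operation `f`,
giving a `(k+1)`-ary operation:
`iterComp f k (x₀,…,x_k) = f x₀ (f x₁ (… f x_{k-1} x_k))`. -/
def iterComp {X : Type*} (f : X → X → X) : (k : ℕ) → (Fin (k + 1) → X) → X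
  | 0, x => x 0
  | k + 1, x => f (x 0) (iterComp f k (fun i => x i.succ))

/-- `F` (an `n`-ary operation) is derived from the binary operation `f`
by iterated composition. -/
def DerivedFrom {X : Type*} (f : X → X → X) {n : ℕ} (F : (Fin n → X) → X) : Prop :=
  ∃ h : n - 1 + 1 = n, ∀ x : Fin n → X, F x = iterComp f (n - 1) (fun i => x (Fin.cast h i))

/-- `CompAt F i x` is `F(x₁,…,xᵢ,F(x_{i+1},…,x_{i+n}),x_{i+n+1},…,x_{2n-1})`
(0-indexed: the inner `F` occupies position `i`). -/
def CompAt {X : Type*} {n : ℕ} (F : (Fin n → X) → X) (i : ℕ) (x : ℕ → X) : X :=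
  F (fun j => if (j : ℕ) < i then x j
      else if (j : ℕ) = i then F (fun k => x (i + (k : ℕ)))
      else x ((j : ℕ) + n - 1))

/-- `n`-associativity of an `n`-ary operation. -/
def NAssoc {X : Type*} {n : ℕ} (F : (Fin n → X) → X) : Prop :=
  ∀ x : ℕ → X, ∀ i < n, CompAt F i x = CompAt F 0 x

/-- Idempotency of an `n`-ary operation. -/
def IdemN {X : Type*} {n : ℕ} (F : (Fin n → X) → X) : Prop :=
  ∀ a : X, F (fun _ => a) = a

/-- `e` is a neutral element of the `n`-ary operation `F`. -/
def IsNeutral {X : Type*} {n : ℕ} (F : (Fin n → X) → X) (e : X) : Prop :=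
  ∀ (x : X) (i : Fin n), F (Function.update (fun _ => e) i x) = x

/-- `F` is monotone (order-preserving or order-reversing) in its `i`-th variable. -/
def MonotoneInVar {X : Type*} [Preorder X] {n : ℕ} (F : (Fin n → X) → X) (i : Fin n) : Prop :=
  ∀ a : Fin n → X,
    Monotone (fun t => F (Function.update a i t)) ∨ Antitone (fun t => F (Function.update a i t))

/-- `F` is monotone increasing (order-preserving) in its `i`-th variable. -/
def IncreasingInVar {X : Type*} [Preorder X] {n : ℕ} (F : (Fin n → X) → X) (i : Fin n) : Prop :=
  ∀ a : Fin n → X, Monotone (fun t => F (Function.update a i t))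

/-- Associativity of a binary operation. -/
def Assoc2 {X : Type*} (f : X → X → X) : Prop := ∀ a b c, f (f a b) c = f a (f b c)

/-- A binary operation is monotone (order-preserving or order-reversing) in each variable. -/
def Mono2 {X : Type*} [Preorder X] (f : X → X → X) : Prop :=
  (∀ a, Monotone (f a) ∨ Antitone (f a)) ∧
  (∀ b, Monotone (fun a => f a b) ∨ Antitone (fun a => f a b))

/-- A binary operation is monotone increasing in each variable. -/
def Incr2 {X : Type*} [Preorder X] (f : X → X → X) : Prop :=
  (∀ a, Monotone (f a)) ∧ (∀ b, Monotone (fun a => f a b))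

/-- Idempotency of a binary operation. -/
def Idem2 {X : Type*} (f : X → X → X) : Prop := ∀ x, f x x = x

/-- `e` is a neutral element of a binary operation. -/
def Neutral2 {X : Type*} (f : X → X → X) (e : X) : Prop := ∀ a, f e a = a ∧ f a e = a

/-- The binary operation `F₂(a,b) = Fₙ(a,e,…,e,b)` associated to an `n`-ary operation. -/
def binOf {X : Type*} {n : ℕ} (F : (Fin n → X) → X) (e : X) : X → X → X :=
  fun a b => F (fun j => if (j : ℕ) = 0 then a else if (j : ℕ) = n - 1 then b else e)

section Bin
variable {X : Type*} [LinearOrder X] {f : X → X → X} {e : X}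

lemma pair_min (monoL : ∀ b, Monotone fun a => f a b) (monoR : ∀ a, Monotone (f a))
    (idem : ∀ x, f x x = x) (hL : ∀ x, f e x = x) (hR : ∀ x, f x e = x)
    {a b : X} (ha : a ≤ e) (hb : b ≤ e) : f a b = min a b := by
  apply le_antisymm
  · apply le_min
    · calc f a b ≤ f a e := monoR a hb
        _ = a := hR a
    · calc f a b ≤ f e b := monoL b ha
        _ = b := hL b
  · calc min a b = f (min a b) (min a b) := (idem _).symm
      _ ≤ f a (min a b) := monoL _ (min_le_left _ _)
      _ ≤ f a b := monoR _ (min_le_right _ _)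

lemma pair_max (monoL : ∀ b, Monotone fun a => f a b) (monoR : ∀ a, Monotone (f a))
    (idem : ∀ x, f x x = x) (hL : ∀ x, f e x = x) (hR : ∀ x, f x e = x)
    {a b : X} (ha : e ≤ a) (hb : e ≤ b) : f a b = max a b := by
  apply le_antisymm
  · calc f a b ≤ f a (max a b) := monoR _ (le_max_right _ _)
      _ ≤ f (max a b) (max a b) := monoL _ (le_max_left _ _)
      _ = max a b := idem _
  · apply max_le
    · calc a = f a e := (hR a).symm
        _ ≤ f a b := monoR a hb
    · calc b = f e b := (hL b).symm
        _ ≤ f a b := monoL b ha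

lemma quasi2 (assoc : ∀ a b c, f (f a b) c = f a (f b c))
    (monoL : ∀ b, Monotone fun a => f a b) (monoR : ∀ a, Monotone (f a))
    (idem : ∀ x, f x x = x) (hL : ∀ x, f e x = x) (hR : ∀ x, f x e = x)
    (a b : X) : f a b = a ∨ f a b = b := by
  have hac : f a (f a b) = f a b := by rw [← assoc, idem]
  have hcb : f (f a b) b = f a b := by rw [assoc, idem]
  rcases le_total a e with hae | hae <;> rcases le_total b e with hbe | hbe
  · rw [pair_min monoL monoR idem hL hR hae hbe]
    rcases le_total a b with h | h
    · left; exact min_eq_left h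
    · right; exact min_eq_right h
  · rcases le_total (f a b) e with hce | hce
    · left
      have h1 : f a (f a b) = min a (f a b) := pair_min monoL monoR idem hL hR hae hce
      rw [hac] at h1
      have h2 : f a b ≤ a := h1.le.trans (min_le_left _ _)
      have h3 : a ≤ f a b := by
        calc a = f a a := (idem a).symm
          _ ≤ f a b := monoR a (hae.trans hbe)
      exact le_antisymm h2 h3
    · right
      have h1 : f (f a b) b = max (f a b) b := pair_max monoL monoR idem hL hR hce hbe
      rw [hcb] at h1
      have h2 : b ≤ f a b := (le_max_right (f a b) b).trans h1.ge
      have h3 : f a b ≤ b := by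
        calc f a b ≤ f e b := monoL b hae
          _ = b := hL b
      exact le_antisymm h3 h2
  · rcases le_total (f a b) e with hce | hce
    · right
      have h1 : f (f a b) b = min (f a b) b := pair_min monoL monoR idem hL hR hce hbe
      rw [hcb] at h1
      have h2 : f a b ≤ b := h1.le.trans (min_le_right _ _)
      have h3 : b ≤ f a b := by
        calc b = f e b := (hL b).symm
          _ ≤ f a b := monoL b hae
      exact le_antisymm h2 h3
    · left
      have h1 : f a (f a b) = max a (f a b) := pair_max monoL monoR idem hL hR hae hce
      rw [hac] at h1
      have h2 : a ≤ f a b := (le_max_left a (f a b)).trans h1.ge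
      have h3 : f a b ≤ a := by
        calc f a b ≤ f a e := monoR a hbe
          _ = a := hR a
      exact le_antisymm h3 h2
  · rw [pair_max monoL monoR idem hL hR hae hbe]
    rcases le_total a b with h | h
    · right; exact max_eq_right h
    · left; exact max_eq_left h

omit [LinearOrder X] in
lemma iter_exists_idx (quasi : ∀ a b, f a b = a ∨ f a b = b) :
    ∀ k (x : Fin (k+1) → X), ∃ i, iterComp f k x = x i := by
  intro k
  induction k with
  | zero => intro x; exact ⟨0, rfl⟩
  | succ k ih =>
    intro x
    rcases quasi (x 0) (iterComp f k (fun i => x i.succ)) with h | h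
    · exact ⟨0, h⟩
    · obtain ⟨i, hi⟩ := ih (fun i => x i.succ)
      exact ⟨i.succ, by
        rw [show iterComp f (k+1) x = f (x 0) (iterComp f k (fun i => x i.succ)) from rfl, h, hi]⟩

omit [LinearOrder X] in
lemma iter_absorb (assoc : ∀ a b c, f (f a b) c = f a (f b c))
    (idem : ∀ x, f x x = x) (quasi : ∀ a b, f a b = a ∨ f a b = b) :
    ∀ k (x : Fin (k+1) → X) (i : Fin (k+1)),
      f (iterComp f k x) (x i) = iterComp f k x ∨
      f (x i) (iterComp f k x) = iterComp f k x := by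
  intro k
  induction k with
  | zero =>
    intro x i
    left
    have : i = 0 := Fin.eq_zero i
    rw [this]
    exact idem _
  | succ k ih =>
    intro x i
    have hr : iterComp f (k+1) x = f (x 0) (iterComp f k (fun i => x i.succ)) := rfl
    rcases Fin.eq_zero_or_eq_succ i with hi | ⟨j, hj⟩
    · subst hi
      rcases quasi (x 0) (iterComp f k (fun i => x i.succ)) with h | h
      · left; rw [hr, h, idem]
      · right; rw [hr, h]; exact h
    · subst hj
      rcases ih (fun i => x i.succ) j with h | h
      · left
        rw [hr, assoc, h]
      · rcases quasi (x 0) (iterComp f k (fun i => x i.succ)) with h0 | h0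
        · rcases quasi (x 0) (x j.succ) with h1 | h1
          · left; rw [hr, h0]; exact h1
          · have h2 := assoc (x 0) (x j.succ) (iterComp f k (fun i => x i.succ))
            rw [h1, h, h0] at h2
            right
            rw [hr, h0, ← h2]
            exact h
        · right; rw [hr, h0]; exact h

omit [LinearOrder X] in
lemma iter_allE (hee : f e e = e) : ∀ k, iterComp f k (fun _ : Fin (k+1) => e) = e := by
  intro k
  induction k with
  | zero => rfl
  | succ k ih =>
    show f e (iterComp f k (fun _ => e)) = e
    rw [ih, hee]

omit [LinearOrder X] in
lemma iter_single (hL : ∀ x, f e x = x) (hR : ∀ x, f x e = x) :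
    ∀ k (m : ℕ), m ≤ k → ∀ c, iterComp f k (fun i => if (i : ℕ) = m then c else e) = c := by
  intro k
  induction k with
  | zero =>
    intro m hm c
    interval_cases m
    simp [iterComp]
  | succ k ih =>
    intro m hm c
    match m with
    | 0 =>
      show f (if (0:ℕ) = 0 then c else e) (iterComp f k _) = c
      have h1 : (fun i : Fin (k+1) => if ((i.succ : Fin (k+2)) : ℕ) = 0 then c else e)
          = (fun _ : Fin (k+1) => e) := by
        funext i; simp [Fin.val_succ]
      rw [h1, iter_allE (by rw [hL]), if_pos rfl, hR]
    | m + 1 =>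
      show f (if (0:ℕ) = m+1 then c else e) (iterComp f k _) = c
      have h1 : (fun i : Fin (k+1) => if ((i.succ : Fin (k+2)) : ℕ) = m+1 then c else e)
          = (fun i : Fin (k+1) => if (i : ℕ) = m then c else e) := by
        funext i; simp [Fin.val_succ]
      rw [h1, ih m (by omega) c, if_neg (by omega), hL]

omit [LinearOrder X] in
lemma iter_two_gap (hL : ∀ x, f e x = x) (hR : ∀ x, f x e = x) :
    ∀ k (m : ℕ), 1 ≤ m → m ≤ k → ∀ u v,
      iterComp f k (fun i => if (i : ℕ) = 0 then u else if (i : ℕ) = m then v else e) = f u v := by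
  intro k m h1m hmk u v
  cases k with
  | zero => omega
  | succ k =>
    show f (if (0:ℕ) = 0 then u else _) (iterComp f k _) = f u v
    have h1 : (fun i : Fin (k+1) =>
        if ((i.succ : Fin (k+2)) : ℕ) = 0 then u
        else if ((i.succ : Fin (k+2)) : ℕ) = m then v else e)
        = (fun i : Fin (k+1) => if (i : ℕ) = m - 1 then v else e) := by
      funext i
      have hs : ((i.succ : Fin (k+2)) : ℕ) = (i : ℕ) + 1 := Fin.val_succ i
      rw [hs]
      have h0 : ¬ ((i : ℕ) + 1 = 0) := by omega
      rw [if_neg h0]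
      by_cases h : (i : ℕ) + 1 = m
      · rw [if_pos h, if_pos (by omega)]
      · rw [if_neg h, if_neg (by omega)]
    rw [h1, iter_single hL hR k (m-1) (by omega) v, if_pos rfl]
end Bin

section Nary
variable {X : Type*} {n : ℕ} (F : (Fin n → X) → X) (e : X)

/-- the binary operation `a, b ↦ F(a,b,e,...,e)` -/
def fb : X → X → X :=
  fun a b => F (fun j => if (j : ℕ) = 0 then a else if (j : ℕ) = 1 then b else e)

variable {F} {e}

lemma neutral_wrap (hn : 2 ≤ n) (he : IsNeutral F e) (w : X) :
    F (fun j : Fin n => if (j : ℕ) = 0 then w else e) = w := by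
  have h := he w ⟨0, by omega⟩
  have h2 : (fun j : Fin n => if (j : ℕ) = 0 then w else e)
      = Function.update (fun _ => e) (⟨0, by omega⟩ : Fin n) w := by
    funext j
    rw [Function.update_apply]
    by_cases h0 : (j : ℕ) = 0
    · rw [if_pos h0, if_pos (Fin.ext h0)]
    · rw [if_neg h0, if_neg (fun hh : j = ⟨0, by omega⟩ => h0 (congrArg Fin.val hh))]
  rw [h2, h]

lemma fb_left_neutral (hn : 2 ≤ n) (he : IsNeutral F e) (b : X) : fb F e e b = b := by
  have h := he b ⟨1, by omega⟩
  have h2 : (fun j : Fin n => if (j : ℕ) = 0 then e else if (j : ℕ) = 1 then b else e)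
      = Function.update (fun _ => e) (⟨1, by omega⟩ : Fin n) b := by
    funext j
    rw [Function.update_apply]
    by_cases h1 : (j : ℕ) = 1
    · rw [if_neg (by omega : ¬ ((j : ℕ) = 0)), if_pos h1, if_pos (Fin.ext h1)]
    · rw [if_neg (fun hh : j = ⟨1, by omega⟩ => h1 (congrArg Fin.val hh))]
      by_cases h0 : (j : ℕ) = 0
      · rw [if_pos h0]
      · rw [if_neg h0, if_neg h1]
  show F _ = b
  rw [h2, h]

lemma fb_right_neutral (hn : 2 ≤ n) (he : IsNeutral F e) (a : X) : fb F e a e = a := by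
  have h2 : (fun j : Fin n => if (j : ℕ) = 0 then a else if (j : ℕ) = 1 then e else e)
      = (fun j : Fin n => if (j : ℕ) = 0 then a else e) := by
    funext j
    by_cases h0 : (j : ℕ) = 0 <;> simp [h0]
  show F _ = a
  rw [h2, neutral_wrap hn he]

lemma Gstep (hn : 2 ≤ n) (hA : NAssoc F) (he : IsNeutral F e) (k : ℕ) (hk : k + 2 ≤ n)
    (x : ℕ → X) :
    F (fun j : Fin n => if (j : ℕ) ≤ k + 1 then x j else e)
      = fb F e (x 0) (F (fun j : Fin n => if (j : ℕ) ≤ k then x ((j : ℕ) + 1) else e)) := by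
  set y : ℕ → X := fun t => if t ≤ k + 1 then x t else e with hy
  have h1 := hA y 1 (by omega)
  have inner1 : (fun t : Fin n => y (1 + (t : ℕ)))
      = (fun j : Fin n => if (j : ℕ) ≤ k then x ((j : ℕ) + 1) else e) := by
    funext t
    by_cases h : (t : ℕ) ≤ k
    · rw [hy]; simp only
      rw [if_pos (by omega : 1 + (t : ℕ) ≤ k + 1), if_pos h, Nat.add_comm]
    · rw [hy]; simp only
      rw [if_neg (by omega : ¬ (1 + (t : ℕ) ≤ k + 1)), if_neg h]
  have inner0 : (fun t : Fin n => y (0 + (t : ℕ)))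
      = (fun j : Fin n => if (j : ℕ) ≤ k + 1 then x (j : ℕ) else e) := by
    funext t
    rw [Nat.zero_add, hy]
  have e1 : CompAt F 1 y
      = fb F e (x 0) (F (fun j : Fin n => if (j : ℕ) ≤ k then x ((j : ℕ) + 1) else e)) := by
    unfold CompAt
    simp only [inner1]
    show F _ = F _
    congr 1
    funext j
    by_cases h0 : (j : ℕ) = 0
    · rw [if_pos (by omega : (j : ℕ) < 1), hy]
      simp only
      rw [h0, if_pos (by omega : 0 ≤ k + 1), if_pos rfl]
    · by_cases h1 : (j : ℕ) = 1
      · rw [if_neg (by omega), if_pos h1, if_neg h0, if_pos h1]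
      · rw [if_neg (by omega), if_neg h1, if_neg h0, if_neg h1, hy]
        simp only
        rw [if_neg (by omega : ¬ ((j : ℕ) + n - 1 ≤ k + 1))]
  have e0 : CompAt F 0 y
      = F (fun j : Fin n => if (j : ℕ) ≤ k + 1 then x (j : ℕ) else e) := by
    unfold CompAt
    simp only [inner0]
    generalize F (fun j : Fin n => if (j : ℕ) ≤ k + 1 then x (j : ℕ) else e) = W
    have harg : (fun j : Fin n => if (j : ℕ) < 0 then y (j : ℕ)
        else if (j : ℕ) = 0 then W else y ((j : ℕ) + n - 1))
        = (fun j : Fin n => if (j : ℕ) = 0 then W else e) := by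
      funext j
      rw [if_neg (by omega)]
      by_cases h0 : (j : ℕ) = 0
      · rw [if_pos h0, if_pos h0]
      · rw [if_neg h0, if_neg h0, hy]
        simp only
        rw [if_neg (by omega : ¬ ((j : ℕ) + n - 1 ≤ k + 1))]
    rw [harg, neutral_wrap hn he]
  rw [← e0, ← h1, e1]

lemma derived_aux (hn : 2 ≤ n) (hA : NAssoc F) (he : IsNeutral F e) :
    ∀ k, k ≤ n - 1 → ∀ x : ℕ → X,
      F (fun j : Fin n => if (j : ℕ) ≤ k then x (j : ℕ) else e)
        = iterComp (fb F e) k (fun i : Fin (k + 1) => x (i : ℕ)) := by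
  intro k
  induction k with
  | zero =>
    intro _ x
    have h2 : (fun j : Fin n => if (j : ℕ) ≤ 0 then x (j : ℕ) else e)
        = (fun j : Fin n => if (j : ℕ) = 0 then x 0 else e) := by
      funext j
      by_cases h0 : (j : ℕ) = 0
      · rw [if_pos (by omega), if_pos h0, h0]
      · rw [if_neg (by omega), if_neg h0]
    rw [h2, neutral_wrap hn he]
    rfl
  | succ k ih =>
    intro hk x
    rw [Gstep hn hA he k (by omega) x, ih (by omega) (fun t => x (t + 1))]
    rfl

lemma derived (hn : 2 ≤ n) (hA : NAssoc F) (he : IsNeutral F e) (x : Fin n → X) :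
    F x = iterComp (fb F e) (n - 1)
      (fun i : Fin (n - 1 + 1) => x ⟨(i : ℕ), by omega⟩) := by
  set xs : ℕ → X := fun t => if h : t < n then x ⟨t, h⟩ else e with hxs
  have h1 := derived_aux hn hA he (n - 1) le_rfl xs
  have h2 : (fun j : Fin n => if (j : ℕ) ≤ n - 1 then xs (j : ℕ) else e) = x := by
    funext j
    rw [if_pos (by omega : (j : ℕ) ≤ n - 1)]
    show (if h : (j : ℕ) < n then x ⟨(j : ℕ), h⟩ else e) = x j
    rw [dif_pos j.isLt]
  have h3 : (fun i : Fin (n - 1 + 1) => xs (i : ℕ))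
      = (fun i : Fin (n - 1 + 1) => x ⟨(i : ℕ), by omega⟩) := by
    funext i
    show (if h : (i : ℕ) < n then x ⟨(i : ℕ), h⟩ else e) = x ⟨(i : ℕ), by omega⟩
    rw [dif_pos (by omega : (i : ℕ) < n)]
  rw [h2, h3] at h1
  exact h1

lemma fb_assoc (hn : 2 ≤ n) (hA : NAssoc F) (he : IsNeutral F e) :
    ∀ a b c, fb F e (fb F e a b) c = fb F e a (fb F e b c) := by
  intro a b c
  set y : ℕ → X := fun t =>
    if t = 0 then a else if t = 1 then b else if t = n then c else e with hy
  have h1 := hA y 1 (by omega)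
  have e0 : CompAt F 0 y = fb F e (fb F e a b) c := by
    unfold CompAt
    have inner : (fun t : Fin n => y (0 + (t : ℕ)))
        = (fun t : Fin n => if (t : ℕ) = 0 then a else if (t : ℕ) = 1 then b else e) := by
      funext t
      have ht := t.isLt
      rw [Nat.zero_add, hy]
      simp only
      by_cases h0 : (t : ℕ) = 0
      · rw [if_pos h0, if_pos h0]
      · rw [if_neg h0, if_neg h0]
        by_cases hone : (t : ℕ) = 1
        · rw [if_pos hone, if_pos hone]
        · rw [if_neg hone, if_neg hone, if_neg (by omega : ¬ ((t : ℕ) = n))]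
    simp only [inner]
    show F _ = F _
    congr 1
    funext j
    by_cases h0 : (j : ℕ) = 0
    · rw [if_neg (by omega : ¬ ((j : ℕ) < 0)), if_pos h0, if_pos h0]
      rfl
    · by_cases hone : (j : ℕ) = 1
      · rw [if_neg (by omega : ¬ ((j : ℕ) < 0)), if_neg h0, if_neg h0, if_pos hone, hy]
        simp only
        rw [if_neg (by omega : ¬ ((j : ℕ) + n - 1 = 0)),
          if_neg (by omega : ¬ ((j : ℕ) + n - 1 = 1)),
          if_pos (by omega : (j : ℕ) + n - 1 = n)]
      · rw [if_neg (by omega : ¬ ((j : ℕ) < 0)), if_neg h0, if_neg h0, if_neg hone, hy]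
        simp only
        rw [if_neg (by omega : ¬ ((j : ℕ) + n - 1 = 0)),
          if_neg (by omega : ¬ ((j : ℕ) + n - 1 = 1)),
          if_neg (by omega : ¬ ((j : ℕ) + n - 1 = n))]
  have e1 : CompAt F 1 y
      = fb F e a (F (fun t : Fin n => if (t : ℕ) = 0 then b
          else if (t : ℕ) = n - 1 then c else e)) := by
    unfold CompAt
    have inner : (fun t : Fin n => y (1 + (t : ℕ)))
        = (fun t : Fin n => if (t : ℕ) = 0 then b else if (t : ℕ) = n - 1 then c else e) := by
      funext t
      have ht := t.isLt
      rw [hy]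
      simp only
      rw [if_neg (by omega : ¬ (1 + (t : ℕ) = 0))]
      by_cases h0 : (t : ℕ) = 0
      · rw [if_pos (by omega : 1 + (t : ℕ) = 1), if_pos h0]
      · rw [if_neg (by omega : ¬ (1 + (t : ℕ) = 1)), if_neg h0]
        by_cases hl : (t : ℕ) = n - 1
        · rw [if_pos (by omega : 1 + (t : ℕ) = n), if_pos hl]
        · rw [if_neg (by omega : ¬ (1 + (t : ℕ) = n)), if_neg hl]
    simp only [inner]
    generalize F (fun t : Fin n => if (t : ℕ) = 0 then b
        else if (t : ℕ) = n - 1 then c else e) = W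
    show F _ = F _
    congr 1
    funext j
    by_cases h0 : (j : ℕ) = 0
    · rw [if_pos (by omega : (j : ℕ) < 1), hy]
      simp only
      rw [if_pos h0, if_pos h0]
    · by_cases hone : (j : ℕ) = 1
      · rw [if_neg (by omega : ¬ ((j : ℕ) < 1)), if_pos hone, if_neg h0, if_pos hone]
      · rw [if_neg (by omega : ¬ ((j : ℕ) < 1)), if_neg hone, if_neg h0, if_neg hone, hy]
        simp only
        rw [if_neg (by omega : ¬ ((j : ℕ) + n - 1 = 0)),
          if_neg (by omega : ¬ ((j : ℕ) + n - 1 = 1)),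
          if_neg (by omega : ¬ ((j : ℕ) + n - 1 = n))]
  have hV : F (fun t : Fin n => if (t : ℕ) = 0 then b
      else if (t : ℕ) = n - 1 then c else e) = fb F e b c := by
    rw [derived hn hA he]
    exact iter_two_gap (fb_left_neutral hn he) (fb_right_neutral hn he)
      (n - 1) (n - 1) (by omega) le_rfl b c
  rw [e1, hV, e0] at h1
  exact h1.symm
end Nary

section Nary2
variable {X : Type*} {n : ℕ} {F : (Fin n → X) → X} {e : X}

lemma fb_monoR [Preorder X] (hn : 2 ≤ n) (hincr : ∀ i, IncreasingInVar F i) :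
    ∀ a, Monotone (fb F e a) := by
  intro a
  have key : ∀ b, fb F e a b
      = F (Function.update (fun j : Fin n => if (j : ℕ) = 0 then a else e)
          (⟨1, by omega⟩ : Fin n) b) := by
    intro b
    show F _ = F _
    congr 1
    funext j
    rw [Function.update_apply]
    by_cases h1 : (j : ℕ) = 1
    · rw [if_neg (by omega : ¬ ((j : ℕ) = 0)), if_pos h1, if_pos (Fin.ext h1)]
    · rw [if_neg (fun hh : j = ⟨1, by omega⟩ => h1 (congrArg Fin.val hh))]
      by_cases h0 : (j : ℕ) = 0
      · rw [if_pos h0, if_pos h0]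
      · rw [if_neg h0, if_neg h1, if_neg h0]
  intro b1 b2 hb
  rw [key b1, key b2]
  exact hincr ⟨1, by omega⟩ _ hb

lemma fb_monoL [Preorder X] (hn : 2 ≤ n) (hincr : ∀ i, IncreasingInVar F i) :
    ∀ b, Monotone (fun a => fb F e a b) := by
  intro b
  have key : ∀ a, fb F e a b
      = F (Function.update (fun j : Fin n => if (j : ℕ) = 1 then b else e)
          (⟨0, by omega⟩ : Fin n) a) := by
    intro a
    show F _ = F _
    congr 1
    funext j
    rw [Function.update_apply]
    by_cases h0 : (j : ℕ) = 0
    · rw [if_pos h0, if_pos (Fin.ext h0)]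
    · rw [if_neg h0, if_neg (fun hh : j = ⟨0, by omega⟩ => h0 (congrArg Fin.val hh))]
  intro a1 a2 ha
  show fb F e a1 b ≤ fb F e a2 b
  rw [key a1, key a2]
  exact hincr ⟨0, by omega⟩ _ ha

lemma fb_idem [LinearOrder X] (hn : 2 ≤ n) (hA : NAssoc F) (he : IsNeutral F e)
    (hidem : IdemN F) (monoR : ∀ a, Monotone (fb F e a)) :
    ∀ a, fb F e a a = a := by
  intro a
  have hkey : a = iterComp (fb F e) (n - 1) (fun _ : Fin (n - 1 + 1) => a) := by
    have h := derived hn hA he (fun _ => a)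
    rw [hidem a] at h
    exact h
  obtain ⟨m, hm⟩ : ∃ m, n - 1 = m + 1 := ⟨n - 2, by omega⟩
  rw [hm] at hkey
  have hkey2 : a = fb F e a (iterComp (fb F e) m (fun _ : Fin (m + 1) => a)) := hkey
  have iter_bd : ∀ k, (a ≤ e → iterComp (fb F e) k (fun _ : Fin (k + 1) => a) ≤ a)
      ∧ (e ≤ a → a ≤ iterComp (fb F e) k (fun _ : Fin (k + 1) => a)) := by
    intro k
    induction k with
    | zero => exact ⟨fun _ => le_refl a, fun _ => le_refl a⟩
    | succ k ih =>
      constructor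
      · intro hae
        show fb F e a (iterComp (fb F e) k (fun _ => a)) ≤ a
        calc fb F e a (iterComp (fb F e) k (fun _ => a)) ≤ fb F e a e :=
              monoR a ((ih.1 hae).trans hae)
          _ = a := fb_right_neutral hn he a
      · intro hea
        show a ≤ fb F e a (iterComp (fb F e) k (fun _ => a))
        calc a = fb F e a e := (fb_right_neutral hn he a).symm
          _ ≤ fb F e a (iterComp (fb F e) k (fun _ => a)) :=
              monoR a (hea.trans (ih.2 hea))
  rcases le_total a e with hae | hea
  · apply le_antisymm
    · calc fb F e a a ≤ fb F e a e := monoR a hae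
        _ = a := fb_right_neutral hn he a
    · calc a = fb F e a (iterComp (fb F e) m (fun _ => a)) := hkey2
        _ ≤ fb F e a a := monoR a ((iter_bd m).1 hae)
  · apply le_antisymm
    · calc fb F e a a ≤ fb F e a (iterComp (fb F e) m (fun _ => a)) :=
            monoR a ((iter_bd m).2 hea)
        _ = a := hkey2.symm
    · calc a = fb F e a e := (fb_right_neutral hn he a).symm
        _ ≤ fb F e a a := monoR a hea
end Nary2

/-- on a nonempty interval `I ⊆ ℝ`, an `n`-associative, monotone increasing,
idempotent `Fₙ` with a neutral element is quasitrivial; in fact its value is always the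
minimum or the maximum of its arguments. -/
theorem stmt17 (I : Set ℝ) (hne : I.Nonempty) (hconn : I.OrdConnected)
    (n : ℕ) (hn : 2 ≤ n) (F : (Fin n → I) → I)
    (hNassoc : NAssoc F) (hincr : ∀ i, IncreasingInVar F i) (hidem : IdemN F)
    (he : ∃ e, IsNeutral F e) :
    ∀ x : Fin n → I,
      (∃ i, F x = x i) ∧
      (F x = Finset.univ.inf' ⟨⟨0, by omega⟩, Finset.mem_univ _⟩ x ∨
       F x = Finset.univ.sup' ⟨⟨0, by omega⟩, Finset.mem_univ _⟩ x) := by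
  obtain ⟨e, he⟩ := he
  have monoR : ∀ a, Monotone (fb F e a) := fb_monoR hn hincr
  have monoL : ∀ b, Monotone (fun a => fb F e a b) := fb_monoL hn hincr
  have hLn : ∀ b, fb F e e b = b := fb_left_neutral hn he
  have hRn : ∀ a, fb F e a e = a := fb_right_neutral hn he
  have assoc := fb_assoc hn hNassoc he
  have idem : ∀ a, fb F e a a = a := fb_idem hn hNassoc he hidem monoR
  have quasi : ∀ a b, fb F e a b = a ∨ fb F e a b = b :=
    quasi2 assoc monoL monoR idem hLn hRn
  intro x
  have hder := derived hn hNassoc he x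
  have Hne : (Finset.univ : Finset (Fin n)).Nonempty :=
    ⟨⟨0, by omega⟩, Finset.mem_univ _⟩
  obtain ⟨i0, hi0⟩ := iter_exists_idx quasi (n - 1)
    (fun i : Fin (n - 1 + 1) => x ⟨(i : ℕ), by omega⟩)
  have hfirst : ∃ i, F x = x i := ⟨⟨(i0 : ℕ), by omega⟩, by rw [hder, hi0]⟩
  refine ⟨hfirst, ?_⟩
  obtain ⟨i1, hFx⟩ := hfirst
  obtain ⟨j, -, hj⟩ := Finset.exists_mem_eq_inf' Hne x
  obtain ⟨l, -, hl⟩ := Finset.exists_mem_eq_sup' Hne x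
  have hmle : Finset.univ.inf' Hne x ≤ F x := by
    rw [hFx]; exact Finset.inf'_le x (Finset.mem_univ i1)
  have hMge : F x ≤ Finset.univ.sup' Hne x := by
    rw [hFx]; exact Finset.le_sup' x (Finset.mem_univ i1)
  by_cases hcm : F x = Finset.univ.inf' Hne x
  · exact Or.inl hcm
  right
  by_contra hcM
  have h1 : Finset.univ.inf' Hne x < F x := lt_of_le_of_ne hmle (fun hh => hcm hh.symm)
  have h2 : F x < Finset.univ.sup' Hne x := lt_of_le_of_ne hMge hcM
  have habj : fb F e (F x) (x j) = F x ∨ fb F e (x j) (F x) = F x := by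
    rw [hder]
    exact iter_absorb assoc idem quasi (n - 1)
      (fun i : Fin (n - 1 + 1) => x ⟨(i : ℕ), by omega⟩) ⟨(j : ℕ), by omega⟩
  have habl : fb F e (F x) (x l) = F x ∨ fb F e (x l) (F x) = F x := by
    rw [hder]
    exact iter_absorb assoc idem quasi (n - 1)
      (fun i : Fin (n - 1 + 1) => x ⟨(i : ℕ), by omega⟩) ⟨(l : ℕ), by omega⟩
  rw [← hj] at habj
  rw [← hl] at habl
  have hegt : e < F x := by
    by_contra hle
    push_neg at hle
    have hme : Finset.univ.inf' Hne x ≤ e := hmle.trans hle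
    rcases habj with h | h
    · rw [pair_min monoL monoR idem hLn hRn hle hme, min_eq_right h1.le] at h
      exact absurd h (ne_of_lt h1)
    · rw [pair_min monoL monoR idem hLn hRn hme hle, min_eq_left h1.le] at h
      exact absurd h (ne_of_lt h1)
  have helt : F x < e := by
    by_contra hle
    push_neg at hle
    have hMe : e ≤ Finset.univ.sup' Hne x := hle.trans hMge
    rcases habl with h | h
    · rw [pair_max monoL monoR idem hLn hRn hle hMe, max_eq_right h2.le] at h
      exact absurd h (ne_of_gt h2)
    · rw [pair_max monoL monoR idem hLn hRn hMe hle, max_eq_left h2.le] at h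
      exact absurd h (ne_of_gt h2)
  exact absurd hegt (not_lt.mpr helt.le)
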